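/- For every σ > 0 and all h_- < h_+ there exist δ₊ = δ₊(σ, h_+−h_-) ∈ (0,1) and δ₋ = δ₋(σ, h_+−h_-) ∈ (0,1) such that for every q ≥ σ, every bounded measurable lG : ℝ → ℝ, and every integer j ≥ 2: sup_{x ≥ h_+} |V⁺_j(x)| ≤ δ₊ · sup_{x ≤ h_-} |V⁻_{j−1}(x)| and sup_{x ≤ h_-} |V⁻_j(x)| ≤ δ₋ · sup_{x ≥ h_+} |V⁺_{j−1}(x)|. -/

import Mathlib

open MeasureTheory ProbabilityTheory Set
open scoped ENNReal

/-- First entrance time of `x + X_t` into `[h, ∞)`, with `inf ∅ = ∞`. -/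
noncomputable def tauPlus {Ω : Type*} (X : ℝ → Ω → ℝ) (x h : ℝ) (ω : Ω) : ℝ≥0∞ :=
  sInf ((fun s : ℝ => ENNReal.ofReal s) '' {s : ℝ | 0 ≤ s ∧ h ≤ x + X s ω})

/-- First entrance time of `x + X_t` into `(-∞, h]`, with `inf ∅ = ∞`. -/
noncomputable def tauMinus {Ω : Type*} (X : ℝ → Ω → ℝ) (x h : ℝ) (ω : Ω) : ℝ≥0∞ :=
  sInf ((fun s : ℝ => ENNReal.ofReal s) '' {s : ℝ | 0 ≤ s ∧ x + X s ω ≤ h})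

/-- The discount factor `1_{t<∞} e^{-q t}`. -/
noncomputable def levyDiscount (q : ℝ) (t : ℝ≥0∞) : ℝ :=
  if t = ⊤ then 0 else Real.exp (-(q * t.toReal))

/-- `Ṽ⁰(x) = ∫_0^∞ e^{-qt} E[lG(x + X_t)] dt`, the Laplace transform of the European price. -/
noncomputable def Vzero {Ω : Type*} [MeasurableSpace Ω] (P : Measure Ω)
    (X : ℝ → Ω → ℝ) (q : ℝ) (lG : ℝ → ℝ) (x : ℝ) : ℝ :=
  ∫ t in Set.Ioi (0 : ℝ), Real.exp (-(q * t)) * ∫ ω, lG (x + X t ω) ∂P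

/-- The pair `(V⁺_j, V⁻_j)` of the recursion; index `0` corresponds to `(Ṽ⁰, Ṽ⁰)`, so that
`V⁺_1(x) = E[1_{τ⁺<∞} e^{-q τ⁺} Ṽ⁰(x + X_{τ⁺})]`, and for `j ≥ 2` the function `V⁺_j`
uses `V⁻_{j-1}` and `V⁻_j` uses `V⁺_{j-1}`. -/
noncomputable def VSeq {Ω : Type*} [MeasurableSpace Ω] (P : Measure Ω)
    (X : ℝ → Ω → ℝ) (q hm hp : ℝ) (lG : ℝ → ℝ) : ℕ → (ℝ → ℝ) × (ℝ → ℝ)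
  | 0 => (Vzero P X q lG, Vzero P X q lG)
  | j + 1 =>
      (fun x => ∫ ω, levyDiscount q (tauPlus X x hp ω) *
          (VSeq P X q hm hp lG j).2 (x + X (tauPlus X x hp ω).toReal ω) ∂P,
       fun x => ∫ ω, levyDiscount q (tauMinus X x hm ω) *
          (VSeq P X q hm hp lG j).1 (x + X (tauMinus X x hm ω).toReal ω) ∂P)

/-!
From `x ≥ h₊` the entrance time `τ⁺` vanishes (as `X₀ = 0`), so `V⁺_j = V⁻_{j-1}` there, and
likewise `V⁺_{j-2} = V⁻_{j-1}` on `(-∞, h₋]`. Hence for `x ≥ h₊`,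
`V⁺_j(x) = E[e^{-qτ⁻} V⁺_{j-2}(x + X_{τ⁻})]` with the integrand bounded by
`S = sup_{y ≤ h₋} |V⁻_{j-1}(y)|` at the landing point. Reaching `(-∞, h₋]` from `[h₊, ∞)` needs a
move of size more than `c = (h₊ - h₋)/2`; right-continuity at `0` gives a `t > 0` such that such
a move happens before `t` with probability at most `1/2`, and otherwise `e^{-qτ⁻} ≤ e^{-σt}`.
This yields the contraction factor `δ = e^{-σt} + (1 - e^{-σt})/2`; the other bound is symmetric.
-/

open Filter Topology

noncomputable def hitTime (g : ℝ → ℝ) (C : Set ℝ) : ℝ≥0∞ :=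
  sInf ((fun s : ℝ => ENNReal.ofReal s) '' {s : ℝ | 0 ≤ s ∧ g s ∈ C})

section HitTime

variable {g : ℝ → ℝ} {C : Set ℝ}

theorem hitTime_eq_zero (h0 : g 0 ∈ C) : hitTime g C = 0 :=
  nonpos_iff_eq_zero.mp <| sInf_le ⟨0, ⟨le_rfl, h0⟩, ENNReal.ofReal_zero⟩

theorem exists_mem_of_hitTime_lt {t : ℝ} (h : hitTime g C < ENNReal.ofReal t) :
    ∃ s, 0 ≤ s ∧ s < t ∧ g s ∈ C := by
  obtain ⟨_, ⟨s, ⟨hs0, hsC⟩, rfl⟩, hst⟩ := sInf_lt_iff.mp h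
  exact ⟨s, hs0, (ENNReal.ofReal_lt_ofReal_iff'.mp hst).1, hsC⟩

theorem hitTime_mem (hg : ∀ t, ContinuousWithinAt g (Ici t) t) (hC : IsClosed C)
    (h : hitTime g C ≠ ⊤) : g (hitTime g C).toReal ∈ C := by
  set T := {s : ℝ | 0 ≤ s ∧ g s ∈ C}
  have hT : T.Nonempty := by
    obtain ⟨_, ⟨s, hs, -⟩, -⟩ := sInf_lt_iff.mp (lt_top_iff_ne_top.mpr h)
    exact ⟨s, hs⟩
  have hbdd : BddBelow T := ⟨0, fun s hs => hs.1⟩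
  have hτ : hitTime g C = ENNReal.ofReal (sInf T) :=
    (Monotone.map_csInf_of_continuousAt ENNReal.continuous_ofReal.continuousAt
      (fun _ _ => ENNReal.ofReal_le_ofReal) hT hbdd).symm
  rw [hτ, ENNReal.toReal_ofReal (le_csInf hT fun s hs => hs.1)]
  obtain ⟨u, huT, hu⟩ := mem_closure_iff_seq_limit.mp (csInf_mem_closure hT hbdd)
  have hu' : Tendsto u atTop (𝓝[Ici (sInf T)] (sInf T)) :=
    tendsto_nhdsWithin_of_tendsto_nhds_of_eventually_within u hu
      (Eventually.of_forall fun n => csInf_le hbdd (huT n))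
  exact hC.mem_of_tendsto ((hg _).tendsto.comp hu') (Eventually.of_forall fun n => (huT n).2)

end HitTime

theorem levyDiscount_nonneg (q : ℝ) (t : ℝ≥0∞) : 0 ≤ levyDiscount q t := by
  unfold levyDiscount
  split_ifs
  exacts [le_rfl, (Real.exp_pos _).le]

theorem levyDiscount_le_exp {q σ t : ℝ} {τ : ℝ≥0∞} (hσ : 0 ≤ σ) (hq : σ ≤ q) (ht : 0 ≤ t)
    (hτ : ENNReal.ofReal t ≤ τ) : levyDiscount q τ ≤ Real.exp (-(σ * t)) := by
  unfold levyDiscount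
  split_ifs with h
  · exact (Real.exp_pos _).le
  · have htτ : t ≤ τ.toReal := (ENNReal.ofReal_le_iff_le_toReal h).mp hτ
    exact Real.exp_le_exp.mpr (neg_le_neg (mul_le_mul hq htτ ht (hσ.trans hq)))

theorem levyDiscount_le_one {q : ℝ} (hq : 0 ≤ q) (τ : ℝ≥0∞) : levyDiscount q τ ≤ 1 := by
  simpa using levyDiscount_le_exp hq le_rfl le_rfl (by simp)

section Integral

variable {Ω : Type*} [MeasurableSpace Ω] {P : Measure Ω} [IsProbabilityMeasure P]

theorem abs_integral_le_of_abs_le_of_abs_le_on_compl {F : Ω → ℝ} {A : Set Ω}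
    (hA : MeasurableSet A) {p e S : ℝ} (hAp : P.real A ≤ p) (he : e ≤ 1) (hS : 0 ≤ S)
    (hF : ∀ ω, |F ω| ≤ S) (hFA : ∀ ω ∉ A, |F ω| ≤ e * S) :
    |∫ ω, F ω ∂P| ≤ (e + (1 - e) * p) * S := by
  set g : Ω → ℝ := fun ω => e * S + A.indicator (fun _ => (1 - e) * S) ω
  have hg : Integrable g P := (integrable_const _).add ((integrable_const _).indicator hA)
  have hFg : ∀ ω, ‖F ω‖ ≤ g ω := by
    intro ω
    by_cases hω : ω ∈ A
    · simpa [g, hω, ← add_mul] using hF ω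
    · simpa [g, hω] using hFA ω hω
  calc |∫ ω, F ω ∂P| ≤ ∫ ω, g ω ∂P := norm_integral_le_of_norm_le hg (ae_of_all _ hFg)
    _ = (e + (1 - e) * P.real A) * S := by
      rw [integral_add (integrable_const _) ((integrable_const _).indicator hA),
        integral_const, integral_indicator_const _ hA]
      simp only [probReal_univ, smul_eq_mul]
      ring
    _ ≤ (e + (1 - e) * p) * S := by gcongr

end Integral

section LargeMove

variable {Ω : Type*}

/-- Rational times make the event measurable; by right-continuity it still contains every `ω`
with `c < |X_s ω|` for some real `s ∈ [0, t)`. -/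
def largeMoveBefore (X : ℝ → Ω → ℝ) (c t : ℝ) : Set Ω :=
  ⋃ (r : ℚ) (_ : 0 ≤ (r : ℝ) ∧ (r : ℝ) < t), {ω | c ≤ |X r ω|}

theorem measurableSet_largeMoveBefore [MeasurableSpace Ω] {X : ℝ → Ω → ℝ}
    (hX : ∀ t, Measurable (X t)) (c t : ℝ) : MeasurableSet (largeMoveBefore X c t) :=
  .iUnion fun r => .iUnion fun _ => measurableSet_le measurable_const (hX r).abs

theorem largeMoveBefore_mono {X : ℝ → Ω → ℝ} {c t t' : ℝ} (h : t ≤ t') :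
    largeMoveBefore X c t ⊆ largeMoveBefore X c t' := by
  simp only [largeMoveBefore, iUnion_subset_iff]
  exact fun r hr => subset_iUnion₂_of_subset r ⟨hr.1, hr.2.trans_le h⟩ subset_rfl

theorem mem_largeMoveBefore {X : ℝ → Ω → ℝ} {ω : Ω}
    (hX : ∀ t, ContinuousWithinAt (fun s => X s ω) (Ici t) t) {c s t : ℝ}
    (hs : 0 ≤ s) (hst : s < t) (hc : c < |X s ω|) : ω ∈ largeMoveBefore X c t := by
  have hev : ∀ᶠ u in 𝓝[Ici s] s, c < |X u ω| ∧ u < t :=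
    (((hX s).abs).eventually (Ioi_mem_nhds hc)).and
      (mem_nhdsWithin_of_mem_nhds (Iio_mem_nhds hst))
  obtain ⟨u, hsu, hu⟩ := mem_nhdsGE_iff_exists_Ico_subset.mp hev
  obtain ⟨r, hsr, hru⟩ := exists_rat_btwn (mem_Ioi.mp hsu)
  obtain ⟨hcr, hrt⟩ := hu ⟨hsr.le, hru⟩
  exact mem_iUnion₂.mpr ⟨r, ⟨hs.trans hsr.le, hrt⟩, hcr.le⟩

theorem mem_largeMoveBefore_of_hitTime_lt {X : ℝ → Ω → ℝ} {ω : Ω}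
    (hX : ∀ t, ContinuousWithinAt (fun s => X s ω) (Ici t) t) {C : Set ℝ} {c x t : ℝ}
    (hC : ∀ y ∈ C, c < |y - x|) (h : hitTime (fun s => x + X s ω) C < ENNReal.ofReal t) :
    ω ∈ largeMoveBefore X c t := by
  obtain ⟨s, hs, hst, hsC⟩ := exists_mem_of_hitTime_lt h
  exact mem_largeMoveBefore hX hs hst (by simpa using hC _ hsC)

theorem exists_measureReal_largeMoveBefore_le [MeasurableSpace Ω] (P : Measure Ω)
    [IsProbabilityMeasure P] {X : ℝ → Ω → ℝ} (hX : ∀ t, Measurable (X t))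
    (hrc : ∀ ω, ∀ t, ContinuousWithinAt (fun s => X s ω) (Ici t) t)
    (hX0 : ∀ᵐ ω ∂P, X 0 ω = 0) {c p : ℝ} (hc : 0 < c) (hp : 0 < p) :
    ∃ t, 0 < t ∧ P.real (largeMoveBefore X c t) ≤ p := by
  set B : ℕ → Set Ω := fun n => largeMoveBefore X c (1 / (n + 1))
  have hB : Antitone B := fun m n hmn =>
    largeMoveBefore_mono (Nat.one_div_le_one_div hmn)
  have hBX0 : ⋂ n, B n ⊆ {ω | c ≤ |X 0 ω|} := by
    intro ω hω
    have hr : ∀ n : ℕ, ∃ r : ℚ, (0 ≤ (r : ℝ) ∧ (r : ℝ) < 1 / (n + 1)) ∧ c ≤ |X r ω| :=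
      fun n => by simpa [B, largeMoveBefore] using mem_iInter.mp hω n
    choose r hr hcr using hr
    have hr0 : Tendsto (fun n => (r n : ℝ)) atTop (𝓝[Ici 0] 0) :=
      tendsto_nhdsWithin_of_tendsto_nhds_of_eventually_within _
        (squeeze_zero (fun n => (hr n).1) (fun n => (hr n).2.le)
          tendsto_one_div_add_atTop_nhds_zero_nat) (Eventually.of_forall fun n => (hr n).1)
    exact ge_of_tendsto (((hrc ω 0).abs).tendsto.comp hr0) (Eventually.of_forall hcr)
  have hnull : P {ω | c ≤ |X 0 ω|} = 0 := by
    refine measure_mono_null ?_ (ae_iff.mp hX0)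
    intro ω (hω : c ≤ |X 0 ω|) h0
    rw [h0, abs_zero] at hω
    linarith
  have hlim : Tendsto (fun n => P (B n)) atTop (𝓝 0) := measure_mono_null hBX0 hnull ▸
    tendsto_measure_iInter_atTop
      (fun n => (measurableSet_largeMoveBefore hX _ _).nullMeasurableSet) hB
      ⟨0, measure_ne_top _ _⟩
  obtain ⟨n, hn⟩ := (hlim.eventually_lt_const (ENNReal.ofReal_pos.mpr hp)).exists
  exact ⟨1 / (n + 1), by positivity, ENNReal.toReal_le_of_le_ofReal hp.le hn.le⟩

end LargeMove

noncomputable def hitValue {Ω : Type*} [MeasurableSpace Ω] (P : Measure Ω) (X : ℝ → Ω → ℝ)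
    (q : ℝ) (C : Set ℝ) (W : ℝ → ℝ) (x : ℝ) : ℝ :=
  ∫ ω, levyDiscount q (hitTime (fun s => x + X s ω) C) *
    W (x + X (hitTime (fun s => x + X s ω) C).toReal ω) ∂P

section HitValue

variable {Ω : Type*} [MeasurableSpace Ω] {P : Measure Ω} {X : ℝ → Ω → ℝ} {q : ℝ}

theorem VSeq_succ (lG : ℝ → ℝ) (hm hp : ℝ) (j : ℕ) :
    VSeq P X q hm hp lG (j + 1) =
      (hitValue P X q (Ici hp) (VSeq P X q hm hp lG j).2,
        hitValue P X q (Iic hm) (VSeq P X q hm hp lG j).1) := rfl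

variable [IsProbabilityMeasure P]

theorem abs_hitValue_le (hq : 0 ≤ q) {C : Set ℝ} {W : ℝ → ℝ} {K : ℝ} (hW : ∀ y, |W y| ≤ K)
    (x : ℝ) : |hitValue P X q C W x| ≤ K := by
  rw [hitValue, ← Real.norm_eq_abs]
  refine (norm_integral_le_of_norm_le_const (ae_of_all _ fun ω => ?_)).trans_eq
    (by simp : K * P.real univ = K)
  rw [Real.norm_eq_abs, abs_mul, abs_of_nonneg (levyDiscount_nonneg _ _)]
  exact (mul_le_of_le_one_left (abs_nonneg _) (levyDiscount_le_one hq _)).trans (hW _)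

theorem hitValue_eq_of_mem (hX0 : ∀ᵐ ω ∂P, X 0 ω = 0) {C : Set ℝ} (W : ℝ → ℝ) {x : ℝ}
    (hx : x ∈ C) : hitValue P X q C W x = W x := by
  have h : ∀ᵐ ω ∂P, levyDiscount q (hitTime (fun s => x + X s ω) C) *
      W (x + X (hitTime (fun s => x + X s ω) C).toReal ω) = W x := by
    filter_upwards [hX0] with ω h0
    rw [hitTime_eq_zero (by simpa [h0] using hx)]
    simp [levyDiscount, h0]
  rw [hitValue, integral_congr_ae h, integral_const, probReal_univ, one_smul]

theorem abs_hitValue_le_of_far (hX : ∀ t, Measurable (X t))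
    (hrc : ∀ ω, ∀ t, ContinuousWithinAt (fun s => X s ω) (Ici t) t)
    {σ c t p S : ℝ} (hσ : 0 ≤ σ) (hq : σ ≤ q) (ht : 0 ≤ t)
    (hp : P.real (largeMoveBefore X c t) ≤ p) (hS : 0 ≤ S)
    {C : Set ℝ} (hC : IsClosed C) {W : ℝ → ℝ} (hW : ∀ y ∈ C, |W y| ≤ S)
    {x : ℝ} (hx : ∀ y ∈ C, c < |y - x|) :
    |hitValue P X q C W x| ≤ (Real.exp (-(σ * t)) + (1 - Real.exp (-(σ * t))) * p) * S := by
  have hF : ∀ ω, |levyDiscount q (hitTime (fun s => x + X s ω) C) *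
      W (x + X (hitTime (fun s => x + X s ω) C).toReal ω)| ≤
        levyDiscount q (hitTime (fun s => x + X s ω) C) * S := by
    intro ω
    rw [abs_mul, abs_of_nonneg (levyDiscount_nonneg _ _)]
    by_cases hτ : hitTime (fun s => x + X s ω) C = ⊤
    · simp [levyDiscount, hτ]
    exact mul_le_mul_of_nonneg_left
      (hW _ (hitTime_mem (fun t => continuousWithinAt_const.add (hrc ω t)) hC hτ))
      (levyDiscount_nonneg _ _)
  refine abs_integral_le_of_abs_le_of_abs_le_on_compl (measurableSet_largeMoveBefore hX c t)
    hp (Real.exp_le_one_iff.mpr (by nlinarith)) hS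
    (fun ω => (hF ω).trans (mul_le_of_le_one_left hS (levyDiscount_le_one (hσ.trans hq) _)))
    (fun ω hω => (hF ω).trans (mul_le_mul_of_nonneg_right ?_ hS))
  exact levyDiscount_le_exp hσ hq ht
    (not_lt.mp fun h => hω (mem_largeMoveBefore_of_hitTime_lt (hrc ω) hx h))

theorem abs_Vzero_le (hq : 0 < q) {lG : ℝ → ℝ} {C : ℝ} (hC : ∀ y, |lG y| ≤ C)
    (x : ℝ) : |Vzero P X q lG x| ≤ C / q := by
  have hE : ∀ t, |∫ ω, lG (x + X t ω) ∂P| ≤ C := fun t => by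
    simpa using norm_integral_le_of_norm_le_const (μ := P) (f := fun ω => lG (x + X t ω))
      (ae_of_all _ fun ω => by simpa using hC (x + X t ω))
  have hint : IntegrableOn (fun t => Real.exp (-(q * t)) * C) (Ioi 0) := by
    simpa [IntegrableOn, neg_mul] using (exp_neg_integrableOn_Ioi 0 hq).mul_const C
  calc |Vzero P X q lG x|
      ≤ ∫ t in Ioi 0, Real.exp (-(q * t)) * C := by
        rw [Vzero, ← Real.norm_eq_abs]
        refine norm_integral_le_of_norm_le hint (ae_of_all _ fun t => ?_)
        rw [Real.norm_eq_abs, abs_mul, Real.abs_exp]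
        exact mul_le_mul_of_nonneg_left (hE t) (Real.exp_pos _).le
    _ = C / q := by
        rw [integral_mul_const]
        simp [← neg_mul, integral_exp_mul_Ioi (neg_neg_of_pos hq)]
        ring

theorem abs_VSeq_le (hq : 0 < q) (hm hp : ℝ) {lG : ℝ → ℝ} {C : ℝ} (hC : ∀ y, |lG y| ≤ C) :
    ∀ j x, |(VSeq P X q hm hp lG j).1 x| ≤ C / q ∧ |(VSeq P X q hm hp lG j).2 x| ≤ C / q
  | 0, x => ⟨abs_Vzero_le hq hC x, abs_Vzero_le hq hC x⟩
  | j + 1, x => by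
    rw [VSeq_succ]
    exact ⟨abs_hitValue_le hq.le (fun y => (abs_VSeq_le hq hm hp hC j y).2) x,
      abs_hitValue_le hq.le (fun y => (abs_VSeq_le hq hm hp hC j y).1) x⟩

theorem biSup_abs_hitValue_hitValue_le (hX : ∀ t, Measurable (X t))
    (hrc : ∀ ω, ∀ t, ContinuousWithinAt (fun s => X s ω) (Ici t) t)
    (hX0 : ∀ᵐ ω ∂P, X 0 ω = 0) {σ c t p : ℝ} (hσ : 0 ≤ σ) (hq : σ ≤ q) (ht : 0 ≤ t)
    (hp : P.real (largeMoveBefore X c t) ≤ p) {C D : Set ℝ} (hC : IsClosed C)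
    (hCD : ∀ x ∈ D, ∀ y ∈ C, c < |y - x|) {W : ℝ → ℝ} {K : ℝ} (hW : ∀ y, |W y| ≤ K) :
    ⨆ x ∈ D, |hitValue P X q D (hitValue P X q C W) x| ≤
      (Real.exp (-(σ * t)) + (1 - Real.exp (-(σ * t))) * p) *
        ⨆ y ∈ C, |hitValue P X q C W y| := by
  set S := ⨆ y ∈ C, |hitValue P X q C W y|
  have hS : 0 ≤ S := Real.iSup_nonneg fun _ => Real.iSup_nonneg fun _ => abs_nonneg _
  have hSbdd : BddAbove (⋃ y, range fun (_ : y ∈ C) => |hitValue P X q C W y|) := by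
    refine ⟨K, ?_⟩
    simp only [mem_upperBounds, mem_iUnion, mem_range]
    rintro _ ⟨y, _, rfl⟩
    exact abs_hitValue_le (hσ.trans hq) hW y
  have hδS : 0 ≤ (Real.exp (-(σ * t)) + (1 - Real.exp (-(σ * t))) * p) * S := by
    have : Real.exp (-(σ * t)) ≤ 1 := Real.exp_le_one_iff.mpr (by nlinarith)
    have : 0 ≤ p := measureReal_nonneg.trans hp
    positivity
  refine Real.iSup_le (fun x => Real.iSup_le (fun hx => ?_) hδS) hδS
  rw [hitValue_eq_of_mem hX0 _ hx]
  refine abs_hitValue_le_of_far hX hrc hσ hq ht hp hS hC (fun y hy => ?_) (hCD x hx)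
  rw [← hitValue_eq_of_mem hX0 W hy]
  exact le_ciSup₂ (f := fun y (_ : y ∈ C) => |hitValue P X q C W y|) hSbdd y hy

end HitValue

theorem sup_bound_recursion_general
    {Ω : Type*} [MeasurableSpace Ω] (P : Measure Ω) [IsProbabilityMeasure P]
    (X : ℝ → Ω → ℝ)
    (hMeas : ∀ t : ℝ, Measurable (X t))
    (hX0 : ∀ᵐ ω ∂P, X 0 ω = 0)
    (hrc : ∀ ω : Ω, ∀ t : ℝ, ContinuousWithinAt (fun s => X s ω) (Set.Ici t) t) :
    ∀ σ > (0 : ℝ), ∀ hm hp : ℝ, hm < hp → ∃ δp δm : ℝ,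
      δp ∈ Set.Ioo (0 : ℝ) 1 ∧ δm ∈ Set.Ioo (0 : ℝ) 1 ∧
      ∀ q ≥ σ, ∀ lG : ℝ → ℝ, Measurable lG → (∃ C : ℝ, ∀ x, |lG x| ≤ C) →
        ∀ j : ℕ, 2 ≤ j →
          (⨆ x ∈ Set.Ici hp, |(VSeq P X q hm hp lG j).1 x|) ≤
            δp * ⨆ x ∈ Set.Iic hm, |(VSeq P X q hm hp lG (j - 1)).2 x| ∧
          (⨆ x ∈ Set.Iic hm, |(VSeq P X q hm hp lG j).2 x|) ≤
            δm * ⨆ x ∈ Set.Ici hp, |(VSeq P X q hm hp lG (j - 1)).1 x| := by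
  intro σ hσ hm hp hmp
  obtain ⟨t, ht, hsmall⟩ := exists_measureReal_largeMoveBefore_le P hMeas hrc hX0
    (c := (hp - hm) / 2) (p := 1 / 2) (by linarith) (by norm_num)
  have he : Real.exp (-(σ * t)) < 1 := Real.exp_lt_one_iff.mpr (by nlinarith)
  have hδ : Real.exp (-(σ * t)) + (1 - Real.exp (-(σ * t))) * (1 / 2) ∈ Ioo (0 : ℝ) 1 :=
    ⟨by nlinarith [Real.exp_pos (-(σ * t))], by linarith⟩
  refine ⟨_, _, hδ, hδ, fun q hq lG _ ⟨C, hC⟩ j hj => ?_⟩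
  obtain ⟨k, rfl⟩ : ∃ k, j = k + 2 := ⟨j - 2, by omega⟩
  have hsep : ∀ x ∈ Ici hp, ∀ y ∈ Iic hm, (hp - hm) / 2 < |y - x| := fun x hx y hy => by
    rw [abs_sub_comm, abs_of_pos (by linarith [mem_Ici.mp hx, mem_Iic.mp hy])]
    linarith [mem_Ici.mp hx, mem_Iic.mp hy]
  have hbdd := abs_VSeq_le (P := P) (X := X) (hσ.trans_le hq) hm hp hC k
  simp only [VSeq_succ]
  exact ⟨biSup_abs_hitValue_hitValue_le hMeas hrc hX0 hσ.le hq ht.le hsmall isClosed_Iic hsep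
      fun y => (hbdd y).1,
    biSup_abs_hitValue_hitValue_le hMeas hrc hX0 hσ.le hq ht.le hsmall isClosed_Ici
      (fun x hx y hy => abs_sub_comm x y ▸ hsep y hy x hx) fun y => (hbdd y).2⟩

theorem sup_bound_recursion
    {Ω : Type*} [MeasurableSpace Ω] (P : Measure Ω) [IsProbabilityMeasure P]
    (X : ℝ → Ω → ℝ)
    (hMeas : ∀ t : ℝ, Measurable (X t))
    (hX0 : ∀ᵐ ω ∂P, X 0 ω = 0)
    (hrc : ∀ ω : Ω, ∀ t : ℝ, ContinuousWithinAt (fun s => X s ω) (Set.Ici t) t)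
    (hIndep : ∀ (n : ℕ) (t : Fin (n + 1) → ℝ), Monotone t → 0 ≤ t 0 →
      iIndepFun
        (fun i : Fin n => fun ω => X (t i.succ) ω - X (t i.castSucc) ω) P)
    (hStat : ∀ s t : ℝ, 0 ≤ s → 0 ≤ t →
      Measure.map (fun ω => X (t + s) ω - X s ω) P = Measure.map (X t) P) :
    ∀ σ > (0 : ℝ), ∀ hm hp : ℝ, hm < hp → ∃ δp δm : ℝ,
      δp ∈ Set.Ioo (0 : ℝ) 1 ∧ δm ∈ Set.Ioo (0 : ℝ) 1 ∧
      ∀ q ≥ σ, ∀ lG : ℝ → ℝ, Measurable lG → (∃ C : ℝ, ∀ x, |lG x| ≤ C) →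
        ∀ j : ℕ, 2 ≤ j →
          (⨆ x ∈ Set.Ici hp, |(VSeq P X q hm hp lG j).1 x|) ≤
            δp * ⨆ x ∈ Set.Iic hm, |(VSeq P X q hm hp lG (j - 1)).2 x| ∧
          (⨆ x ∈ Set.Iic hm, |(VSeq P X q hm hp lG j).2 x|) ≤
            δm * ⨆ x ∈ Set.Ici hp, |(VSeq P X q hm hp lG (j - 1)).1 x| :=
  sup_bound_recursion_general P X hMeas hX0 hrc
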